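/- For every integer n ≥ 5, the Kneser graph K(n,2) contains no induced path on 6 vertices. -/

import Mathlib

/-!
In an induced path `v₀ … v₅` of `K(n,2)`, each of `v₃, v₄, v₅` is non-adjacent to both `v₀` and
`v₁`, so it meets both of these disjoint pairs and is a transversal `{a, b}` with `a ∈ v₀`,
`b ∈ v₁`. Two disjoint transversals use complementary elements of `v₀` and of `v₁`, so `v₃` and
`v₅`, both disjoint from `v₄`, are the same transversal, contradicting injectivity.
-/

open SimpleGraph

/-- The Kneser graph `K(n,2)`: vertices are the 2-element subsets of `{1,…,n}`,
adjacent iff disjoint. -/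
def kneser (n : ℕ) : SimpleGraph {s : Finset (Fin n) // s.card = 2} where
  Adj u v := Disjoint u.1 v.1
  symm := ⟨fun u v h => h.symm⟩
  loopless := by
    constructor
    intro u h
    have h0 : u.1 = ∅ := disjoint_self.mp h
    have h2 := u.2
    rw [h0] at h2
    simp at h2

namespace Finset

variable {α : Type*} [DecidableEq α]

theorem eq_of_mem_of_card_eq_two {A : Finset α} {a b c : α} (hA : #A = 2)
    (ha : a ∈ A) (hb : b ∈ A) (hc : c ∈ A) (hac : a ≠ c) (hbc : b ≠ c) : a = b := by
  obtain ⟨x, y, hxy, rfl⟩ := card_eq_two.mp hA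
  simp only [mem_insert, mem_singleton] at ha hb hc
  grind

theorem exists_eq_pair_of_not_disjoint {A B X : Finset α} (hX : #X = 2) (hAB : Disjoint A B)
    (hXA : ¬Disjoint X A) (hXB : ¬Disjoint X B) : ∃ a ∈ A, ∃ b ∈ B, X = {a, b} := by
  obtain ⟨a, haX, haA⟩ := not_disjoint_iff.mp hXA
  obtain ⟨b, hbX, hbB⟩ := not_disjoint_iff.mp hXB
  have hab : a ≠ b := fun h => disjoint_left.mp hAB haA (h ▸ hbB)
  refine ⟨a, haA, b, hbB, (eq_of_subset_of_card_le ?_ (by rw [card_pair hab, hX])).symm⟩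
  simp [insert_subset_iff, haX, hbX]

theorem eq_of_disjoint_of_not_disjoint {A B C D E : Finset α}
    (hA : #A = 2) (hB : #B = 2) (hC : #C = 2) (hE : #E = 2) (hAB : Disjoint A B)
    (hCA : ¬Disjoint C A) (hCB : ¬Disjoint C B)
    (hDA : ¬Disjoint D A) (hDB : ¬Disjoint D B)
    (hEA : ¬Disjoint E A) (hEB : ¬Disjoint E B)
    (hCD : Disjoint C D) (hDE : Disjoint D E) : C = E := by
  obtain ⟨a₁, ha₁, b₁, hb₁, rfl⟩ := exists_eq_pair_of_not_disjoint hC hAB hCA hCB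
  obtain ⟨a₃, ha₃, b₃, hb₃, rfl⟩ := exists_eq_pair_of_not_disjoint hE hAB hEA hEB
  obtain ⟨a₂, haD, ha₂⟩ := not_disjoint_iff.mp hDA
  obtain ⟨b₂, hbD, hb₂⟩ := not_disjoint_iff.mp hDB
  have ha₁₂ : a₁ ≠ a₂ := fun h => disjoint_left.mp hCD (by simp) (h ▸ haD)
  have hb₁₂ : b₁ ≠ b₂ := fun h => disjoint_left.mp hCD (by simp) (h ▸ hbD)
  have ha₃₂ : a₃ ≠ a₂ := fun h => disjoint_right.mp hDE (by simp) (h ▸ haD)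
  have hb₃₂ : b₃ ≠ b₂ := fun h => disjoint_right.mp hDE (by simp) (h ▸ hbD)
  rw [eq_of_mem_of_card_eq_two hA ha₁ ha₃ ha₂ ha₁₂ ha₃₂,
    eq_of_mem_of_card_eq_two hB hb₁ hb₃ hb₂ hb₁₂ hb₃₂]

end Finset

theorem kneser_no_induced_P6_general (n : ℕ) :
    IsEmpty (pathGraph 6 ↪g kneser n) := by
  refine ⟨fun f => ?_⟩
  have adj (i j : Fin 6) (h : (pathGraph 6).Adj i j) : Disjoint (f i).1 (f j).1 :=
    f.map_adj_iff.2 h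
  have not_adj (i j : Fin 6) (h : ¬(pathGraph 6).Adj i j) : ¬Disjoint (f i).1 (f j).1 :=
    mt f.map_adj_iff.1 h
  have h35 : (f 3).1 = (f 5).1 :=
    Finset.eq_of_disjoint_of_not_disjoint (f 0).2 (f 1).2 (f 3).2 (f 5).2
      (adj 0 1 (by simp [pathGraph_adj]))
      (not_adj 3 0 (by simp [pathGraph_adj])) (not_adj 3 1 (by simp [pathGraph_adj]))
      (not_adj 4 0 (by simp [pathGraph_adj])) (not_adj 4 1 (by simp [pathGraph_adj]))
      (not_adj 5 0 (by simp [pathGraph_adj])) (not_adj 5 1 (by simp [pathGraph_adj]))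
      (adj 3 4 (by simp [pathGraph_adj])) (adj 4 5 (by simp [pathGraph_adj]))
  exact absurd (f.injective (Subtype.ext h35)) (by decide)

/-- For every integer `n ≥ 5`, the Kneser graph `K(n,2)` contains no induced path on
6 vertices. -/
theorem kneser_no_induced_P6 (n : ℕ) (hn : 5 ≤ n) :
    IsEmpty (pathGraph 6 ↪g kneser n) :=
  kneser_no_induced_P6_general n
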